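/- For each integer n with |n| ≥ 2, the function j(τ,ξ) = jₙ·exp(i(nξ + n√(n²−1)·τ)) + j₋ₙ·exp(i(−nξ − n√(n²−1)·τ)), with complex constants satisfying conj(j₋ₙ) = 2(n√(n²−1) − n² + 1/2)·jₙ, solves the complex linearized equation ∂_τ j = −i ∂²_ξ j − (i/2)(j − conj(j)). -/

import Mathlib

/-!
Both exponentials are eigenfunctions of `∂_τ` and `∂²_ξ`, and conjugation swaps them, so the
equation splits into one linear relation between the coefficients for each of `e^{iθ}` and
`e^{-iθ}`. The `e^{iθ}` relation is the hypothesis on `conj j₋ₙ`; conjugating it and using the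
dispersion relation `ω² = n²(n² − 1)` for `ω = n√(n² − 1)` turns it into the `e^{-iθ}` relation.
-/

open Complex

noncomputable section

def twoMode (A B c d : ℂ) (t : ℝ) : ℂ :=
  A * cexp (c * t + d) + B * cexp (-(c * t + d))

lemma hasDerivAt_twoMode (A B c d : ℂ) (t : ℝ) :
    HasDerivAt (twoMode A B c d) (twoMode (c * A) (-(c * B)) c d t) t := by
  have hphase : HasDerivAt (fun t : ℝ => c * t + d) c t := by
    simpa using ((ofRealCLM.hasDerivAt (x := t)).const_mul c).add_const d
  refine ((hphase.cexp.const_mul A).add (hphase.neg.cexp.const_mul B)).congr_deriv ?_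
  simp only [twoMode, Pi.neg_apply]
  ring

lemma deriv_twoMode (A B c d : ℂ) :
    deriv (twoMode A B c d) = twoMode (c * A) (-(c * B)) c d :=
  funext fun t => (hasDerivAt_twoMode A B c d t).deriv

lemma deriv_deriv_twoMode (A B c d : ℂ) (t : ℝ) :
    deriv (deriv (twoMode A B c d)) t = c ^ 2 * twoMode A B c d t := by
  rw [deriv_twoMode, deriv_twoMode, twoMode, twoMode]
  ring

def planeWave (a b : ℂ) (k ω τ ξ : ℝ) : ℂ :=
  a * cexp (I * (k * ξ + ω * τ)) + b * cexp (-(I * (k * ξ + ω * τ)))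

section planeWave

variable (a b : ℂ) (k ω τ ξ : ℝ)

lemma planeWave_eq_twoMode_time :
    (fun τ => planeWave a b k ω τ ξ) = twoMode a b (I * ω) (I * k * ξ) := by
  funext τ
  simp only [planeWave, twoMode]
  ring_nf

lemma planeWave_eq_twoMode_space :
    (fun ξ => planeWave a b k ω τ ξ) = twoMode a b (I * k) (I * ω * τ) := by
  funext ξ
  simp only [planeWave, twoMode]
  ring_nf

lemma deriv_planeWave_time :
    deriv (fun τ => planeWave a b k ω τ ξ) τ
      = planeWave (I * ω * a) (-(I * ω * b)) k ω τ ξ := by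
  rw [planeWave_eq_twoMode_time, deriv_twoMode, ← planeWave_eq_twoMode_time]

lemma deriv_deriv_planeWave_space :
    deriv (deriv fun ξ => planeWave a b k ω τ ξ) ξ = -k ^ 2 * planeWave a b k ω τ ξ := by
  rw [planeWave_eq_twoMode_space, deriv_deriv_twoMode, ← planeWave_eq_twoMode_space, mul_pow,
    I_sq, neg_one_mul]

lemma conj_planeWave :
    starRingEnd ℂ (planeWave a b k ω τ ξ)
      = planeWave (starRingEnd ℂ b) (starRingEnd ℂ a) k ω τ ξ := by
  simp only [planeWave, map_add, map_mul, map_neg, ← exp_conj, conj_I, conj_ofReal]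
  ring_nf

/-- `hpos` and `hneg` are the coefficient equations of `e^{iθ}` and `e^{-iθ}`. -/
lemma planeWave_solves_of_coeff
    (hpos : starRingEnd ℂ b = 2 * (ω - k ^ 2 + 1 / 2) * a)
    (hneg : starRingEnd ℂ a = -2 * (ω + k ^ 2 - 1 / 2) * b) :
    deriv (fun τ => planeWave a b k ω τ ξ) τ
      = -I * deriv (deriv fun ξ => planeWave a b k ω τ ξ) ξ
        - I / 2 * (planeWave a b k ω τ ξ - starRingEnd ℂ (planeWave a b k ω τ ξ)) := by
  rw [deriv_planeWave_time, deriv_deriv_planeWave_space, conj_planeWave, hpos, hneg]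
  simp only [planeWave]
  ring

end planeWave

lemma conj_eq_of_conj_eq_of_dispersion {a b : ℂ} {k ω : ℝ} (hω : ω ^ 2 = k ^ 2 * (k ^ 2 - 1))
    (hpos : starRingEnd ℂ b = 2 * (ω - k ^ 2 + 1 / 2) * a) :
    starRingEnd ℂ a = -2 * (ω + k ^ 2 - 1 / 2) * b := by
  have hb : b = 2 * (ω - k ^ 2 + 1 / 2) * starRingEnd ℂ a := by
    simpa [map_ofNat] using congrArg (starRingEnd ℂ) hpos
  have hωC : (ω : ℂ) ^ 2 = k ^ 2 * (k ^ 2 - 1) := by exact_mod_cast hω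
  rw [hb]
  linear_combination (4 * starRingEnd ℂ a) * hωC

lemma sq_mul_sqrt_sq_sub_one {n : ℝ} (hn : 1 ≤ n ^ 2) :
    (n * √(n ^ 2 - 1)) ^ 2 = n ^ 2 * (n ^ 2 - 1) := by
  rw [mul_pow, Real.sq_sqrt (by linarith)]

end

/-- for each integer `n` with `|n| ≥ 2`, the function
`j(τ,ξ) = jₙ e^{i(nξ + n√(n²−1)τ)} + j₋ₙ e^{−i(nξ + n√(n²−1)τ)}`, with constants
satisfying `conj(j₋ₙ) = 2(n√(n²−1) − n² + 1/2) jₙ`, solves the complex linearized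
equation `∂_τ j = −i ∂²_ξ j − (i/2)(j − conj j)`. -/
theorem stmt_4 (n : ℤ) (hn : 2 ≤ |n|) (jn jm : ℂ)
    (hrel : (starRingEnd ℂ) jm
      = 2 * ((n : ℂ) * (Real.sqrt ((n : ℝ)^2 - 1) : ℝ) - (n : ℂ)^2 + 1/2) * jn)
    (j : ℝ → ℝ → ℂ)
    (hj : ∀ τ ξ : ℝ, j τ ξ
      = jn * Complex.exp (Complex.I *
          ((n : ℂ) * (ξ : ℂ) + (n : ℂ) * (Real.sqrt ((n : ℝ)^2 - 1) : ℝ) * (τ : ℂ)))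
      + jm * Complex.exp (-(Complex.I *
          ((n : ℂ) * (ξ : ℂ) + (n : ℂ) * (Real.sqrt ((n : ℝ)^2 - 1) : ℝ) * (τ : ℂ))))) :
    ∀ τ ξ : ℝ, deriv (fun τ => j τ ξ) τ
      = -Complex.I * deriv (deriv (fun ξ => j τ ξ)) ξ
        - Complex.I / 2 * (j τ ξ - (starRingEnd ℂ) (j τ ξ)) := by
  set ω : ℝ := n * √((n : ℝ) ^ 2 - 1)
  have hj_wave : j = planeWave jn jm n ω := by
    funext τ ξ
    rw [hj, planeWave]
    push_cast [ω]
    rfl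
  have hn_sq : (1 : ℝ) ≤ (n : ℝ) ^ 2 := by
    have : (2 : ℝ) ≤ |(n : ℝ)| := by exact_mod_cast hn
    nlinarith [sq_abs (n : ℝ)]
  have hpos : starRingEnd ℂ jm = 2 * (ω - ((n : ℝ) : ℂ) ^ 2 + 1 / 2) * jn := by
    rw [hrel]
    push_cast [ω]
    ring
  intro τ ξ
  rw [hj_wave]
  exact planeWave_solves_of_coeff jn jm n ω τ ξ hpos
    (conj_eq_of_conj_eq_of_dispersion (sq_mul_sqrt_sq_sub_one hn_sq) hpos)
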